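/- Let N ≥ 3 and let φ₁, φ₂ be positive C² radial solutions on B_R of the equations −Δφ_i + U_{φ_i} φ_i = λ φ_i (same λ > 0), with φ_i'(0) = 0, where U_{φ}(r) = ∫_0^r |S^(N-1)| s^(N-1)(s^(2-N) − r^(2-N)) |φ(s)|² ds. Then for r ∈ (0, R), (φ₁(r)/φ₂(r))' = (1/(r^(N−1) φ₂(r)²)) ∫_0^r s^(N−1) (U_{φ₁}(s) − U_{φ₂}(s)) φ₁(s) φ₂(s) ds. -/

import Mathlib

/-!
Put `W(r) = r^{N-1} (φ₁' φ₂ - φ₁ φ₂')`. Multiplying each radial equation by the other solution and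
subtracting, the `λ`-terms cancel and the first-order terms combine with the derivative of the weight
`r^{N-1}`, so `W' = r^{N-1} (U_{φ₁} - U_{φ₂}) φ₁ φ₂`. The weight makes `W(0) = 0`, so integrating
gives `W(r)`, and `(φ₁/φ₂)' = W / (r^{N-1} φ₂²)`. The only analytic point is the integrability of
`W'` near `0`, where `U_φ` contains the singular factor `r^{2-N}`: but `r^{N-1} U_φ(r)` equals
`A (r^{N-1} ∫₀ʳ s φ² - r ∫₀ʳ s^{N-1} φ²)`, which is continuous up to `0`.
-/

open MeasureTheory Set intervalIntegral

noncomputable def radialPotential (A : ℝ) (N : ℕ) (φ : ℝ → ℝ) (r : ℝ) : ℝ :=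
  ∫ s in (0 : ℝ)..r, A * s ^ (N - 1) * (s ^ ((2 : ℝ) - N) - r ^ ((2 : ℝ) - N)) * φ s ^ 2

lemma pow_pred_mul_rpow_two_sub {N : ℕ} (hN : 1 ≤ N) {s : ℝ} (hs : 0 ≤ s) :
    s ^ (N - 1) * s ^ ((2 : ℝ) - N) = s := by
  have hexp : ((N - 1 : ℕ) : ℝ) + ((2 : ℝ) - N) = 1 := by
    rw [Nat.cast_sub hN]; ring
  rw [← Real.rpow_natCast, ← Real.rpow_add' hs (by rw [hexp]; exact one_ne_zero), hexp,
    Real.rpow_one]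

lemma radialPotential_eq {A : ℝ} {N : ℕ} (hN : 1 ≤ N) {φ : ℝ → ℝ} {r : ℝ} (hr : 0 ≤ r)
    (hφ : ContinuousOn φ (Icc 0 r)) :
    radialPotential A N φ r = A * (∫ s in (0 : ℝ)..r, s * φ s ^ 2)
      - A * r ^ ((2 : ℝ) - N) * ∫ s in (0 : ℝ)..r, s ^ (N - 1) * φ s ^ 2 := by
  rw [← uIcc_of_le hr] at hφ
  have hF : IntervalIntegrable (fun s => A * (s * φ s ^ 2)) volume 0 r :=
    (continuousOn_const.mul (continuousOn_id.mul (hφ.pow 2))).intervalIntegrable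
  have hG : IntervalIntegrable
      (fun s => A * r ^ ((2 : ℝ) - N) * (s ^ (N - 1) * φ s ^ 2)) volume 0 r :=
    (continuousOn_const.mul ((continuousOn_id.pow _).mul (hφ.pow 2))).intervalIntegrable
  rw [← intervalIntegral.integral_const_mul, ← intervalIntegral.integral_const_mul,
    ← integral_sub hF hG]
  refine integral_congr fun s hs => ?_
  rw [uIcc_of_le hr] at hs
  linear_combination A * φ s ^ 2 * pow_pred_mul_rpow_two_sub hN hs.1

lemma continuousOn_pow_mul_radialPotential (A : ℝ) {N : ℕ} (hN : 1 ≤ N) {φ : ℝ → ℝ} {r : ℝ}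
    (hr : 0 ≤ r) (hφ : ContinuousOn φ (Icc 0 r)) :
    ContinuousOn (fun s => s ^ (N - 1) * radialPotential A N φ s) (Icc 0 r) := by
  have hprim : ∀ {w : ℝ → ℝ}, ContinuousOn w (Icc 0 r) →
      ContinuousOn (fun s => ∫ t in (0 : ℝ)..s, w t * φ t ^ 2) (Icc 0 r) := fun hw => by
    rw [← uIcc_of_le hr] at hw hφ ⊢
    exact continuousOn_primitive_interval ((hw.mul (hφ.pow 2)).integrableOn_compact isCompact_uIcc)
  have hF := hprim (w := id) continuousOn_id
  have hG := hprim (w := fun t => t ^ (N - 1)) (by fun_prop)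
  refine ContinuousOn.congr (f := fun s => A * (s ^ (N - 1) * (∫ t in (0 : ℝ)..s, t * φ t ^ 2)
    - s * ∫ t in (0 : ℝ)..s, t ^ (N - 1) * φ t ^ 2)) (by fun_prop) fun s hs => ?_
  rw [radialPotential_eq hN hs.1 (hφ.mono (Icc_subset_Icc le_rfl hs.2))]
  linear_combination (-A * ∫ t in (0 : ℝ)..s, t ^ (N - 1) * φ t ^ 2)
    * pow_pred_mul_rpow_two_sub hN hs.1

section Wronskian

variable {k : ℕ} {lam : ℝ} {f g f' g' V₁ V₂ : ℝ → ℝ}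

lemma hasDerivAt_pow_mul_wronskian {s : ℝ} (hs : s ≠ 0) (hf : HasDerivAt f (f' s) s)
    (hg : HasDerivAt g (g' s) s)
    (hf' : HasDerivAt f' ((V₁ s - lam) * f s - k / s * f' s) s)
    (hg' : HasDerivAt g' ((V₂ s - lam) * g s - k / s * g' s) s) :
    HasDerivAt (fun t => t ^ k * (f' t * g t - f t * g' t))
      (s ^ k * (V₁ s - V₂ s) * f s * g s) s := by
  refine ((hasDerivAt_pow k s).mul ((hf'.mul hg).sub (hf.mul hg'))).congr_deriv ?_
  simp only [Pi.mul_apply, Pi.sub_apply]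
  rcases k with _ | k
  · simp only [CharP.cast_eq_zero, zero_div, pow_zero]; ring
  · field_simp
    push_cast
    ring

lemma pow_mul_wronskian_eq_integral (hk : k ≠ 0) {r : ℝ} (hr : 0 ≤ r)
    (hfc : ContinuousOn f (Icc 0 r)) (hgc : ContinuousOn g (Icc 0 r))
    (hf'c : ContinuousOn f' (Icc 0 r)) (hg'c : ContinuousOn g' (Icc 0 r))
    (hf : ∀ s ∈ Ioo 0 r, HasDerivAt f (f' s) s) (hg : ∀ s ∈ Ioo 0 r, HasDerivAt g (g' s) s)
    (hf' : ∀ s ∈ Ioo 0 r, HasDerivAt f' ((V₁ s - lam) * f s - k / s * f' s) s)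
    (hg' : ∀ s ∈ Ioo 0 r, HasDerivAt g' ((V₂ s - lam) * g s - k / s * g' s) s)
    (hint : IntervalIntegrable (fun s => s ^ k * (V₁ s - V₂ s) * f s * g s) volume 0 r) :
    r ^ k * (f' r * g r - f r * g' r) = ∫ s in (0 : ℝ)..r, s ^ k * (V₁ s - V₂ s) * f s * g s := by
  rw [integral_eq_sub_of_hasDerivAt_of_le hr
    ((continuousOn_id.pow k).mul ((hf'c.mul hgc).sub (hfc.mul hg'c)))
    (fun s hs => hasDerivAt_pow_mul_wronskian hs.1.ne' (hf s hs) (hg s hs) (hf' s hs) (hg' s hs))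
    hint]
  simp [zero_pow hk]

end Wronskian

theorem wronskian_identity_general (N : ℕ) (hN : 3 ≤ N) (R lam A : ℝ)
    (φ₁ φ₂ φ₁' φ₂' U₁ U₂ : ℝ → ℝ)
    (hU₁ : ∀ r, U₁ r = ∫ s in (0 : ℝ)..r,
      A * s ^ (N - 1) * (s ^ ((2 : ℝ) - N) - r ^ ((2 : ℝ) - N)) * φ₁ s ^ 2)
    (hU₂ : ∀ r, U₂ r = ∫ s in (0 : ℝ)..r,
      A * s ^ (N - 1) * (s ^ ((2 : ℝ) - N) - r ^ ((2 : ℝ) - N)) * φ₂ s ^ 2)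
    (hpos₂ : ∀ r ∈ Ico 0 R, 0 < φ₂ r)
    (hφ₁c : ContinuousOn φ₁ (Icc 0 R)) (hφ₂c : ContinuousOn φ₂ (Icc 0 R))
    (hφ₁'c : ContinuousOn φ₁' (Icc 0 R)) (hφ₂'c : ContinuousOn φ₂' (Icc 0 R))
    (hd₁ : ∀ r ∈ Ioo 0 R, HasDerivAt φ₁ (φ₁' r) r)
    (hd₂ : ∀ r ∈ Ioo 0 R, HasDerivAt φ₂ (φ₂' r) r)
    (hode₁ : ∀ r ∈ Ioo 0 R,
      HasDerivAt φ₁' ((U₁ r - lam) * φ₁ r - (N - 1) / r * φ₁' r) r)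
    (hode₂ : ∀ r ∈ Ioo 0 R,
      HasDerivAt φ₂' ((U₂ r - lam) * φ₂ r - (N - 1) / r * φ₂' r) r) :
    ∀ r ∈ Ioo 0 R,
      HasDerivAt (fun t => φ₁ t / φ₂ t)
        ((1 / (r ^ (N - 1) * φ₂ r ^ 2)) *
          ∫ s in (0 : ℝ)..r, s ^ (N - 1) * (U₁ s - U₂ s) * φ₁ s * φ₂ s) r := by
  intro r hr
  obtain rfl : U₁ = radialPotential A N φ₁ := funext hU₁
  obtain rfl : U₂ = radialPotential A N φ₂ := funext hU₂
  have hk : ((N - 1 : ℕ) : ℝ) = N - 1 := by rw [Nat.cast_sub (by omega), Nat.cast_one]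
  simp only [← hk] at hode₁ hode₂
  have hsub : Icc 0 r ⊆ Icc 0 R := Icc_subset_Icc le_rfl hr.2.le
  have hIoo : Ioo 0 r ⊆ Ioo 0 R := Ioo_subset_Ioo le_rfl hr.2.le
  have hφ₁r := hφ₁c.mono hsub
  have hφ₂r := hφ₂c.mono hsub
  have hV₁ := continuousOn_pow_mul_radialPotential A (N := N) (by omega) hr.1.le hφ₁r
  have hV₂ := continuousOn_pow_mul_radialPotential A (N := N) (by omega) hr.1.le hφ₂r
  have hint : IntervalIntegrable (fun s => s ^ (N - 1) *
      (radialPotential A N φ₁ s - radialPotential A N φ₂ s) * φ₁ s * φ₂ s) volume 0 r := by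
    refine ContinuousOn.intervalIntegrable (uIcc_of_le hr.1.le ▸ ?_)
    exact ((hV₁.sub hV₂).mul hφ₁r).mul hφ₂r |>.congr fun s _ => by
      simp only [Pi.mul_apply, Pi.sub_apply]; ring
  rw [← pow_mul_wronskian_eq_integral (by omega) hr.1.le hφ₁r hφ₂r
    (hφ₁'c.mono hsub) (hφ₂'c.mono hsub) (fun s hs => hd₁ s (hIoo hs))
    (fun s hs => hd₂ s (hIoo hs)) (fun s hs => hode₁ s (hIoo hs))
    (fun s hs => hode₂ s (hIoo hs)) hint]
  refine ((hd₁ r hr).div (hd₂ r hr) (hpos₂ r (Ioo_subset_Ico_self hr)).ne').congr_deriv ?_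
  field_simp [pow_ne_zero (N - 1) hr.1.ne']

/-- Wronskian-type identity: if `φ₁, φ₂` are positive radial solutions of
`φ'' + ((N-1)/r) φ' = (U_{φᵢ}(r) - λ) φ` with `φᵢ'(0) = 0`, then
`(φ₁/φ₂)'(r) = (1/(r^{N-1} φ₂(r)²)) ∫₀ʳ s^{N-1}(U_{φ₁}(s) - U_{φ₂}(s)) φ₁(s) φ₂(s) ds`. -/
theorem wronskian_identity (N : ℕ) (hN : 3 ≤ N) (R lam A : ℝ) (hR : 0 < R) (hA : 0 < A)
    (φ₁ φ₂ φ₁' φ₂' U₁ U₂ : ℝ → ℝ)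
    (hU₁ : ∀ r, U₁ r = ∫ s in (0 : ℝ)..r,
      A * s ^ (N - 1) * (s ^ ((2 : ℝ) - N) - r ^ ((2 : ℝ) - N)) * φ₁ s ^ 2)
    (hU₂ : ∀ r, U₂ r = ∫ s in (0 : ℝ)..r,
      A * s ^ (N - 1) * (s ^ ((2 : ℝ) - N) - r ^ ((2 : ℝ) - N)) * φ₂ s ^ 2)
    (hpos₁ : ∀ r ∈ Ico 0 R, 0 < φ₁ r) (hpos₂ : ∀ r ∈ Ico 0 R, 0 < φ₂ r)
    (hφ₁c : ContinuousOn φ₁ (Icc 0 R)) (hφ₂c : ContinuousOn φ₂ (Icc 0 R))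
    (hφ₁'c : ContinuousOn φ₁' (Icc 0 R)) (hφ₂'c : ContinuousOn φ₂' (Icc 0 R))
    (hd₁ : ∀ r ∈ Ioo 0 R, HasDerivAt φ₁ (φ₁' r) r)
    (hd₂ : ∀ r ∈ Ioo 0 R, HasDerivAt φ₂ (φ₂' r) r)
    (hode₁ : ∀ r ∈ Ioo 0 R,
      HasDerivAt φ₁' ((U₁ r - lam) * φ₁ r - (N - 1) / r * φ₁' r) r)
    (hode₂ : ∀ r ∈ Ioo 0 R,
      HasDerivAt φ₂' ((U₂ r - lam) * φ₂ r - (N - 1) / r * φ₂' r) r)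
    (hneu₁ : φ₁' 0 = 0) (hneu₂ : φ₂' 0 = 0) :
    ∀ r ∈ Ioo 0 R,
      HasDerivAt (fun t => φ₁ t / φ₂ t)
        ((1 / (r ^ (N - 1) * φ₂ r ^ 2)) *
          ∫ s in (0 : ℝ)..r, s ^ (N - 1) * (U₁ s - U₂ s) * φ₁ s * φ₂ s) r :=
  wronskian_identity_general N hN R lam A φ₁ φ₂ φ₁' φ₂' U₁ U₂ hU₁ hU₂ hpos₂ hφ₁c hφ₂c hφ₁'c hφ₂'c
    hd₁ hd₂ hode₁ hode₂
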